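/- arXiv:1201.0978 — 4 statements merged into one kernel-verified Lean document; each statement's English description precedes it below -/
import Mathlib

section
/- Let P ≤ Q be a subgroup of finite index, χ: Q → ℝ a nonzero character, and ψ = χ restricted to P. If a ℤQ-module A is finitely generated over the monoid ring ℤQ_χ, then A is finitely generated over the monoid ring ℤP_ψ. -/
def fgOver {Q : Type*} [Group Q] (M : Set Q) (A : Type*) [AddCommGroup A]
    [Module (MonoidAlgebra ℤ Q) A] : Prop :=
  ∃ S : Finset A, AddSubgroup.closure
    {x : A | ∃ s ∈ S, ∃ q ∈ M, x = (MonoidAlgebra.single q (1:ℤ) : MonoidAlgebra ℤ Q) • s} = ⊤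

open Classical in
noncomputable def vchi {Q : Type*} (χ : Q → ℝ) (lam : MonoidAlgebra ℤ Q) : WithTop ℝ :=
  if h : lam = 0 then ⊤
  else ((lam.coeff.support.inf' (Finsupp.support_nonempty_iff.mpr (mt MonoidAlgebra.coeff_eq_zero.mp h)) χ : ℝ) : WithTop ℝ)

/-!
Every `q ∈ Q` can be moved into `P` by right multiplication with one of finitely many elements
`t` with `χ t ≥ 0`: a coset representative of `q⁻¹ P`, pushed into `Q_χ` by a power of some
`u ∈ P` with `χ u > 0`. Then `q • s = (q t) • (t⁻¹ • s)` with `q t ∈ P_ψ` when `χ q ≥ 0`, so the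
finitely many `t⁻¹ • s` generate `A` over `ℤP_ψ`.
-/

theorem fgOver_of_forall_exists_mul_mem {Q : Type*} [Group Q] {M M' : Set Q}
    {A : Type*} [AddCommGroup A] [Module (MonoidAlgebra ℤ Q) A]
    (T : Finset Q) (hT : ∀ q ∈ M, ∃ t ∈ T, q * t ∈ M') (hA : fgOver M A) :
    fgOver M' A := by
  classical
  obtain ⟨S, hS⟩ := hA
  refine ⟨(T ×ˢ S).image fun ts =>
    (MonoidAlgebra.single ts.1⁻¹ (1 : ℤ) : MonoidAlgebra ℤ Q) • ts.2, ?_⟩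
  rw [eq_top_iff, ← hS]
  apply AddSubgroup.closure_mono
  rintro _ ⟨s, hs, q, hq, rfl⟩
  obtain ⟨t, ht, hqt⟩ := hT q hq
  refine ⟨_, Finset.mem_image_of_mem _ (Finset.mk_mem_product ht hs), q * t, hqt, ?_⟩
  rw [← mul_smul, MonoidAlgebra.single_mul_single, one_mul, mul_inv_cancel_right]

section Character

variable {Q : Type*} [Group Q] {χ : Q → ℝ}

theorem map_one_of_map_mul (hχ : ∀ a b : Q, χ (a * b) = χ a + χ b) : χ 1 = 0 := by
  simpa using hχ 1 1

theorem map_inv_of_map_mul (hχ : ∀ a b : Q, χ (a * b) = χ a + χ b) (q : Q) :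
    χ q⁻¹ = -χ q := by
  have h := hχ q q⁻¹
  rw [mul_inv_cancel, map_one_of_map_mul hχ] at h
  linarith

theorem map_pow_of_map_mul (hχ : ∀ a b : Q, χ (a * b) = χ a + χ b) (q : Q) (k : ℕ) :
    χ (q ^ k) = k * χ q := by
  induction k with
  | zero => simp [map_one_of_map_mul hχ]
  | succ k ih => rw [pow_succ, hχ, ih]; push_cast; ring

theorem exists_pos_of_map_mul_of_ne_zero (hχ : ∀ a b : Q, χ (a * b) = χ a + χ b)
    (hne : χ ≠ 0) : ∃ q, 0 < χ q := by
  obtain ⟨q, hq⟩ := Function.ne_iff.mp hne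
  rcases (show χ q ≠ 0 from hq).lt_or_gt with hneg | hpos
  · exact ⟨q⁻¹, by rw [map_inv_of_map_mul hχ]; linarith⟩
  · exact ⟨q, hpos⟩

theorem Subgroup.exists_mem_pos_of_map_mul (hχ : ∀ a b : Q, χ (a * b) = χ a + χ b)
    (P : Subgroup Q) [P.FiniteIndex] {q : Q} (hq : 0 < χ q) : ∃ u ∈ P, 0 < χ u := by
  obtain ⟨k, hk, -, hqk⟩ := P.exists_pow_mem_of_index_ne_zero P.index_ne_zero_of_finite q
  refine ⟨q ^ k, hqk, ?_⟩
  rw [map_pow_of_map_mul hχ]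
  exact mul_pos (Nat.cast_pos.mpr hk) hq

theorem exists_nonneg_mul_pow (hχ : ∀ a b : Q, χ (a * b) = χ a + χ b) {u : Q}
    (hu : 0 < χ u) (r : Q) : ∃ k : ℕ, 0 ≤ χ (r * u ^ k) := by
  obtain ⟨k, hk⟩ := Archimedean.arch (-χ r) hu
  rw [nsmul_eq_mul] at hk
  exact ⟨k, by rw [hχ, map_pow_of_map_mul hχ]; linarith⟩

theorem Subgroup.exists_finset_mul_mem_and_nonneg (hχ : ∀ a b : Q, χ (a * b) = χ a + χ b)
    (P : Subgroup Q) [P.FiniteIndex] {u : Q} (huP : u ∈ P) (hu : 0 < χ u) :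
    ∃ T : Finset Q, ∀ q, ∃ t ∈ T, q * t ∈ P ∧ 0 ≤ χ t := by
  choose k hk using exists_nonneg_mul_pow hχ hu
  let t : Q ⧸ P → Q := fun d => d.out * u ^ k d.out
  refine ⟨(Set.finite_range t).toFinset, fun q =>
    ⟨t ((q⁻¹ : Q) : Q ⧸ P), by simp, ?_, hk _⟩⟩
  have hrep : q * ((q⁻¹ : Q) : Q ⧸ P).out ∈ P := by
    simpa using QuotientGroup.eq.mp (QuotientGroup.out_eq' ((q⁻¹ : Q) : Q ⧸ P)).symm
  rw [← mul_assoc]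
  exact P.mul_mem hrep (P.pow_mem huP _)

end Character

theorem stmt4_general {Q : Type*} [Group Q]
    (P : Subgroup Q) [P.FiniteIndex]
    (A : Type*) [AddCommGroup A] [Module (MonoidAlgebra ℤ Q) A]
    (χ : Q → ℝ) (hhom : ∀ a b : Q, χ (a * b) = χ a + χ b) (hne : χ ≠ 0)
    (hA : fgOver {q : Q | 0 ≤ χ q} A) :
    fgOver {q : Q | q ∈ P ∧ 0 ≤ χ q} A := by
  obtain ⟨q, hq⟩ := exists_pos_of_map_mul_of_ne_zero hhom hne
  obtain ⟨u, huP, hu⟩ := P.exists_mem_pos_of_map_mul hhom hq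
  obtain ⟨T, hT⟩ := P.exists_finset_mul_mem_and_nonneg hhom huP hu
  refine fgOver_of_forall_exists_mul_mem T (fun q (hq : 0 ≤ χ q) => ?_) hA
  obtain ⟨t, ht, hqtP, hχt⟩ := hT q
  exact ⟨t, ht, hqtP, by rw [hhom]; linarith⟩

theorem stmt4 {Q : Type*} [Group Q] (hQ : Group.FG Q)
    (P : Subgroup Q) [P.FiniteIndex]
    (A : Type*) [AddCommGroup A] [Module (MonoidAlgebra ℤ Q) A]
    [Module.Finite (MonoidAlgebra ℤ Q) A]
    (χ : Q → ℝ) (hhom : ∀ a b : Q, χ (a * b) = χ a + χ b) (hne : χ ≠ 0)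
    (hA : fgOver {q : Q | 0 ≤ χ q} A) :
    fgOver {q : Q | q ∈ P ∧ 0 ≤ χ q} A :=
  stmt4_general P A χ hhom hne hA
end

section
/- Let Q be a finitely generated group, A a ℤQ-module generated by the finite set 𝒜, and χ: Q → ℝ a nonzero character. If A is finitely generated over the monoid ring ℤQ_χ, then for any r ≥ 0 there exists a matrix (λ_{a,a₁}) over ℤQ_χ with a₁ = Σ_{a ∈ 𝒜} a·λ_{a,a₁} for each a₁ ∈ 𝒜 and v_χ(λ_{a,a₁}) > r for all entries. -/
/-!
If `A = ∑ s ∈ S, ℤQ_χ s` and `χ t` is large, then `A = t • A = ∑ s ∈ S, (t ℤQ_χ) s`, so every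
element of `A` is a combination of `S` with coefficients supported where `χ ≥ χ t`. Writing each
`s ∈ S` over `𝒜` lowers the valuation by at most a fixed amount, so a large enough `χ t` gives
coefficients over `𝒜` of valuation `> r`. Such a `t` exists because a nonzero character is
unbounded above.
-/

open MonoidAlgebra

theorem exists_lt_of_map_mul_eq_add {G : Type*} [Group G] {χ : G → ℝ}
    (hχ : ∀ a b, χ (a * b) = χ a + χ b) (hne : χ ≠ 0) (M : ℝ) : ∃ t, M < χ t := by
  let f : Additive G →+ ℝ := AddMonoidHom.mk' (fun q => χ q.toMul) fun a b => hχ _ _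
  obtain ⟨q, hq⟩ : ∃ q, 0 < f q := by
    obtain ⟨q, hq⟩ := Function.ne_iff.1 hne
    rcases (Ne.lt_or_gt hq : χ q < 0 ∨ 0 < χ q) with hneg | hpos
    · exact ⟨-Additive.ofMul q, by rw [map_neg]; exact neg_pos.2 hneg⟩
    · exact ⟨Additive.ofMul q, hpos⟩
  obtain ⟨n, hn⟩ := exists_lt_nsmul hq M
  exact ⟨(n • q).toMul, by rwa [← map_nsmul] at hn⟩

theorem Finset.sum_smul_eq_sum_sum_mul_smul {R M ι κ : Type*} [Semiring R] [AddCommMonoid M]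
    [Module R M] {S : Finset ι} {T : Finset κ} (σ : ι → R) {v : ι → M} (ν : ι → κ → R)
    (w : κ → M) (hv : ∀ i ∈ S, v i = ∑ k ∈ T, ν i k • w k) :
    ∑ i ∈ S, σ i • v i = ∑ k ∈ T, (∑ i ∈ S, σ i * ν i k) • w k := by
  calc ∑ i ∈ S, σ i • v i = ∑ i ∈ S, ∑ k ∈ T, (σ i * ν i k) • w k :=
        Finset.sum_congr rfl fun i hi => by simp only [hv i hi, Finset.smul_sum, mul_smul]
    _ = _ := by rw [Finset.sum_comm]; simp only [Finset.sum_smul]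

namespace MonoidAlgebra

variable {R G : Type*} [Semiring R]

theorem single_mem_supported {s : Set G} {t : G} (r : R) (ht : t ∈ s) :
    single t r ∈ supported R R s :=
  fun q hq => by rwa [Finset.mem_singleton.1 (Finsupp.support_single_subset hq)]

theorem mul_mem_supported_setOf_le [Mul G] {χ : G → ℝ} (hχ : ∀ a b, χ (a * b) = χ a + χ b)
    {x y : R[G]} {a b : ℝ} (hx : x ∈ supported R R {q | a ≤ χ q})
    (hy : y ∈ supported R R {q | b ≤ χ q}) : x * y ∈ supported R R {q | a + b ≤ χ q} := by
  classical
  intro q hq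
  obtain ⟨q₁, h₁, q₂, h₂, rfl⟩ := Finset.mem_mul.1 (support_coeff_mul_subset x y hq)
  show a + b ≤ χ (q₁ * q₂)
  rw [hχ]
  exact add_le_add (hx h₁) (hy h₂)

theorem exists_forall_mem_supported_setOf_le {ι : Type*} (s : Finset ι) (x : ι → R[G])
    (χ : G → ℝ) : ∃ c, ∀ i ∈ s, x i ∈ supported R R {q | c ≤ χ q} := by
  classical
  obtain ⟨c, hc⟩ := ((s.biUnion fun i => (x i).coeff.support).image χ).bddBelow
  exact ⟨c, fun i hi q hq =>
    hc (Finset.mem_coe.2 (Finset.mem_image_of_mem χ (Finset.mem_biUnion.2 ⟨i, hi, hq⟩)))⟩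

end MonoidAlgebra

theorem lt_vchi_of_mem_supported {Q : Type*} {χ : Q → ℝ} {x : ℤ[Q]} {r c : ℝ} (hrc : r < c)
    (hx : x ∈ supported ℤ ℤ {q | c ≤ χ q}) : (r : WithTop ℝ) < vchi χ x := by
  unfold vchi
  split_ifs
  · exact WithTop.coe_lt_top r
  · rw [WithTop.coe_lt_coe, Finset.lt_inf'_iff]
    exact fun q hq => hrc.trans_le (hx hq)

section fgOver

variable {Q A : Type*} [Group Q] [AddCommGroup A] [Module ℤ[Q] A]

theorem exists_sum_smul_of_fgOver {M : Set Q} (h : fgOver M A) :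
    ∃ S : Finset A, ∀ x : A, ∃ σ : A → ℤ[Q],
      (∀ s, σ s ∈ supported ℤ ℤ M) ∧ x = ∑ s ∈ S, σ s • s := by
  classical
  obtain ⟨S, hS⟩ := h
  refine ⟨S, fun x => ?_⟩
  induction (hS ▸ AddSubgroup.mem_top x : x ∈ AddSubgroup.closure _)
    using AddSubgroup.closure_induction with
  | mem _ hx =>
    obtain ⟨s₀, hs₀, q, hq, rfl⟩ := hx
    refine ⟨Pi.single s₀ (single q 1), fun s => ?_, ?_⟩
    · rcases eq_or_ne s s₀ with rfl | hs
      · simpa using single_mem_supported (1 : ℤ) hq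
      · simp [hs]
    · rw [Finset.sum_eq_single_of_mem s₀ hs₀ fun s _ hs => by simp [hs]]
      simp
  | zero => exact ⟨0, fun _ => zero_mem _, by simp⟩
  | add _ _ _ _ h₁ h₂ =>
    obtain ⟨σ₁, h₁, rfl⟩ := h₁
    obtain ⟨σ₂, h₂, rfl⟩ := h₂
    exact ⟨σ₁ + σ₂, fun s => add_mem (h₁ s) (h₂ s), by simp [add_smul, Finset.sum_add_distrib]⟩
  | neg _ _ h =>
    obtain ⟨σ, h, rfl⟩ := h
    exact ⟨-σ, fun s => neg_mem (h s), by simp⟩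

theorem exists_sum_smul_mem_supported_setOf_le {χ : Q → ℝ} (hχ : ∀ a b, χ (a * b) = χ a + χ b)
    {S : Finset A} (hS : ∀ x : A, ∃ σ : A → ℤ[Q],
      (∀ s, σ s ∈ supported ℤ ℤ {q | 0 ≤ χ q}) ∧ x = ∑ s ∈ S, σ s • s) (t : Q) (x : A) :
    ∃ τ : A → ℤ[Q], (∀ s, τ s ∈ supported ℤ ℤ {q | χ t ≤ χ q}) ∧ x = ∑ s ∈ S, τ s • s := by
  obtain ⟨σ, hσ, hx⟩ := hS ((single t⁻¹ 1 : ℤ[Q]) • x)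
  refine ⟨fun s => single t 1 * σ s, fun s => ?_, ?_⟩
  · simpa using mul_mem_supported_setOf_le hχ (single_mem_supported (1 : ℤ) (le_refl (χ t))) (hσ s)
  · calc x = (single t 1 : ℤ[Q]) • (single t⁻¹ 1 : ℤ[Q]) • x := by
          rw [smul_smul, single_mul_single, mul_inv_cancel, mul_one, ← one_def, one_smul]
      _ = _ := by rw [hx, Finset.smul_sum]; simp only [smul_smul]

end fgOver

theorem stmt12_general {Q : Type*} [Group Q]
    (A : Type*) [AddCommGroup A] [Module (MonoidAlgebra ℤ Q) A]
    (𝒜 : Finset A) (hgen : Submodule.span (MonoidAlgebra ℤ Q) (𝒜 : Set A) = ⊤)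
    (χ : Q → ℝ) (hhom : ∀ a b : Q, χ (a * b) = χ a + χ b) (hne : χ ≠ 0)
    (hfg : fgOver {q : Q | 0 ≤ χ q} A) :
    ∀ r : ℝ, 0 ≤ r → ∃ lam : A → A → MonoidAlgebra ℤ Q,
      (∀ a ∈ 𝒜, ∀ a₁ ∈ 𝒜, ∀ q ∈ (lam a a₁).coeff.support, 0 ≤ χ q) ∧
      (∀ a₁ ∈ 𝒜, a₁ = ∑ a ∈ 𝒜, lam a a₁ • a) ∧
      (∀ a ∈ 𝒜, ∀ a₁ ∈ 𝒜, (r : WithTop ℝ) < vchi χ (lam a a₁)) := by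
  intro r hr
  obtain ⟨S, hS⟩ := exists_sum_smul_of_fgOver hfg
  choose ν _ hν using fun s : A => Submodule.mem_span_finset.1 (hgen ▸ Submodule.mem_top (x := s))
  obtain ⟨C, hC⟩ := exists_forall_mem_supported_setOf_le (S ×ˢ 𝒜) (fun p => ν p.1 p.2) χ
  obtain ⟨t, ht⟩ := exists_lt_of_map_mul_eq_add hhom hne (r - C)
  choose τ hτ hxτ using exists_sum_smul_mem_supported_setOf_le hhom hS t
  have hlam : ∀ a ∈ 𝒜, ∀ a₁, ∑ s ∈ S, τ a₁ s * ν s a ∈ supported ℤ ℤ {q | χ t + C ≤ χ q} :=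
    fun a ha a₁ => sum_mem fun s hs =>
      mul_mem_supported_setOf_le hhom (hτ a₁ s) (hC (s, a) (Finset.mem_product.2 ⟨hs, ha⟩))
  refine ⟨fun a a₁ => ∑ s ∈ S, τ a₁ s * ν s a, fun a ha a₁ _ q hq => ?_, fun a₁ _ => ?_,
    fun a ha a₁ _ => lt_vchi_of_mem_supported (by linarith) (hlam a ha a₁)⟩
  · have : χ t + C ≤ χ q := hlam a ha a₁ hq
    linarith
  · conv_lhs => rw [hxτ a₁]
    exact Finset.sum_smul_eq_sum_sum_mul_smul _ ν id fun s _ => (hν s).symm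

theorem stmt12 {Q : Type*} [Group Q] (hQ : Group.FG Q)
    (A : Type*) [AddCommGroup A] [Module (MonoidAlgebra ℤ Q) A]
    (𝒜 : Finset A) (hgen : Submodule.span (MonoidAlgebra ℤ Q) (𝒜 : Set A) = ⊤)
    (χ : Q → ℝ) (hhom : ∀ a b : Q, χ (a * b) = χ a + χ b) (hne : χ ≠ 0)
    (hfg : fgOver {q : Q | 0 ≤ χ q} A) :
    ∀ r : ℝ, 0 ≤ r → ∃ lam : A → A → MonoidAlgebra ℤ Q,
      (∀ a ∈ 𝒜, ∀ a₁ ∈ 𝒜, ∀ q ∈ (lam a a₁).coeff.support, 0 ≤ χ q) ∧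
      (∀ a₁ ∈ 𝒜, a₁ = ∑ a ∈ 𝒜, lam a a₁ • a) ∧
      (∀ a ∈ 𝒜, ∀ a₁ ∈ 𝒜, (r : WithTop ℝ) < vchi χ (lam a a₁)) :=
  stmt12_general A 𝒜 hgen χ hhom hne hfg
end

section
/- Let Q be a group whose derived subgroup Q' is finitely generated, χ: Q → ℝ a nonzero character, and A a finitely generated ℤQ-module. Then A is finitely generated over the monoid ring ℤQ_χ if and only if A is finitely generated over the monoid ring ℤM of some finitely generated submonoid M ⊆ Q_χ. -/
/-!
Suppose `A = ℤQ_χ · S` with `S` finite and let `X` be a finite monoid generating set of `Q`.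
Each of the finitely many elements `x • s` (`x ∈ X`, `s ∈ S`) involves only finitely many
elements of `Q_χ`; together with finitely many generators of `Q'` (on which `χ` vanishes) they
generate a submonoid `M ⊆ Q_χ` with `Q' ⊆ M` and `X • S ⊆ ℤM · S`. Then `ℤM · S` is stable
under every `x ∈ X`, since `x m = m ⁅m⁻¹, x⁆ x` with `⁅m⁻¹, x⁆ ∈ Q' ⊆ M`; so it is a
`ℤQ`-submodule containing `S`, hence all of `A`. The converse holds because `Q_χ` is a monoid.
-/

open MonoidAlgebra
open scoped commutatorElement

section SpanOver

variable {Q : Type*} [Group Q] {A : Type*} [AddCommGroup A] [Module (MonoidAlgebra ℤ Q) A]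

/-- `ℤM · S`: for a submonoid `M`, the `ℤM`-submodule generated by `S`. -/
noncomputable def spanOver (M : Set Q) (S : Set A) : AddSubgroup A :=
  AddSubgroup.closure {x | ∃ s ∈ S, ∃ q ∈ M, x = of ℤ Q q • s}

theorem fgOver_iff_exists_spanOver_eq_top {M : Set Q} :
    fgOver M A ↔ ∃ S : Finset A, spanOver M (S : Set A) = ⊤ :=
  Iff.rfl

variable {M M' : Set Q} {S : Set A}

theorem of_smul_mem_spanOver {q : Q} {s : A} (hq : q ∈ M) (hs : s ∈ S) :
    of ℤ Q q • s ∈ spanOver M S :=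
  AddSubgroup.subset_closure ⟨s, hs, q, hq, rfl⟩

theorem spanOver_mono (h : M ⊆ M') : spanOver M S ≤ spanOver M' S := by
  refine AddSubgroup.closure_mono ?_
  rintro _ ⟨s, hs, q, hq, rfl⟩
  exact ⟨s, hs, q, h hq, rfl⟩

theorem exists_finset_of_mem_spanOver {a : A} (ha : a ∈ spanOver M S) :
    ∃ F : Finset Q, (F : Set Q) ⊆ M ∧ a ∈ spanOver (F : Set Q) S := by
  classical
  induction ha using AddSubgroup.closure_induction with
  | mem x hx =>
    obtain ⟨s, hs, q, hq, rfl⟩ := hx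
    exact ⟨{q}, by simpa using hq, of_smul_mem_spanOver (by simp) hs⟩
  | zero => exact ⟨∅, by simp, zero_mem _⟩
  | add x y _ _ ihx ihy =>
    obtain ⟨F₁, hF₁, hx⟩ := ihx
    obtain ⟨F₂, hF₂, hy⟩ := ihy
    refine ⟨F₁ ∪ F₂, by simp [hF₁, hF₂], add_mem ?_ ?_⟩
    · exact spanOver_mono (by simp) hx
    · exact spanOver_mono (by simp) hy
  | neg x _ ihx =>
    obtain ⟨F, hF, hx⟩ := ihx
    exact ⟨F, hF, neg_mem hx⟩

theorem exists_finset_of_subset_spanOver (G : Finset A) (hG : (G : Set A) ⊆ spanOver M S) :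
    ∃ F : Finset Q, (F : Set Q) ⊆ M ∧ (G : Set A) ⊆ spanOver (F : Set Q) S := by
  classical
  induction G using Finset.induction_on with
  | empty => exact ⟨∅, by simp, by simp⟩
  | insert a G _ ih =>
    rw [Finset.coe_insert, Set.insert_subset_iff] at hG
    obtain ⟨F₁, hF₁, ha⟩ := exists_finset_of_mem_spanOver hG.1
    obtain ⟨F₂, hF₂, hG⟩ := ih hG.2
    refine ⟨F₁ ∪ F₂, by simp [hF₁, hF₂], ?_⟩
    rw [Finset.coe_insert, Set.insert_subset_iff]
    exact ⟨spanOver_mono (by simp) ha, hG.trans (spanOver_mono (by simp))⟩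

theorem of_smul_mem_spanOver_of_forall {q : Q}
    (h : ∀ m ∈ M, ∀ s ∈ S, of ℤ Q (q * m) • s ∈ spanOver M S) {a : A}
    (ha : a ∈ spanOver M S) : of ℤ Q q • a ∈ spanOver M S := by
  have hle : spanOver M S ≤ (spanOver M S).comap (DistribSMul.toAddMonoidHom A (of ℤ Q q)) := by
    refine AddSubgroup.closure_le _ |>.2 ?_
    rintro _ ⟨s, hs, m, hm, rfl⟩
    simpa [smul_smul] using h m hm s hs
  exact hle ha

theorem subset_spanOver (h : (1 : Q) ∈ M) : S ⊆ spanOver M S := fun s hs => by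
  simpa only [map_one, one_smul, SetLike.mem_coe] using of_smul_mem_spanOver (S := S) h hs

theorem of_smul_mem_spanOver_submonoid {P : Submonoid Q} {p : Q} (hp : p ∈ P) {a : A}
    (ha : a ∈ spanOver (P : Set Q) S) : of ℤ Q p • a ∈ spanOver (P : Set Q) S :=
  of_smul_mem_spanOver_of_forall (fun _ hm _ hs => of_smul_mem_spanOver (mul_mem hp hm) hs) ha

theorem of_smul_mem_spanOver_of_commutator_le {P : Submonoid Q}
    (hP : (commutator Q).toSubmonoid ≤ P) {g : Q}
    (hg : ∀ s ∈ S, of ℤ Q g • s ∈ spanOver (P : Set Q) S) {a : A}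
    (ha : a ∈ spanOver (P : Set Q) S) : of ℤ Q g • a ∈ spanOver (P : Set Q) S := by
  refine of_smul_mem_spanOver_of_forall (fun m hm s hs => ?_) ha
  have hc : ⁅m⁻¹, g⁆ ∈ P :=
    hP (Subgroup.commutator_mem_commutator (Subgroup.mem_top _) (Subgroup.mem_top _))
  have hgm : g * m = m * ⁅m⁻¹, g⁆ * g := by rw [commutatorElement_def]; group
  rw [hgm, map_mul, mul_smul]
  exact of_smul_mem_spanOver_submonoid (mul_mem hm hc) (hg s hs)

theorem spanOver_le_of_closure_eq_top {P : Submonoid Q} (hP : (commutator Q).toSubmonoid ≤ P)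
    {X : Set Q} (hX : Submonoid.closure X = ⊤)
    (hXS : ∀ x ∈ X, ∀ s ∈ S, of ℤ Q x • s ∈ spanOver (P : Set Q) S) (M : Set Q) :
    spanOver M S ≤ spanOver (P : Set Q) S := by
  let stab : Submonoid Q :=
    { carrier := {g | ∀ a ∈ spanOver (P : Set Q) S, of ℤ Q g • a ∈ spanOver (P : Set Q) S}
      one_mem' := fun a ha => by rwa [map_one, one_smul]
      mul_mem' := fun hg hh a ha => by rw [map_mul, mul_smul]; exact hg _ (hh a ha) }
  have hstab : Submonoid.closure X ≤ stab := Submonoid.closure_le.2 fun x hx _ ha =>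
    of_smul_mem_spanOver_of_commutator_le hP (hXS x hx) ha
  refine AddSubgroup.closure_le _ |>.2 ?_
  rintro _ ⟨s, hs, q, -, rfl⟩
  exact hstab (hX ▸ Submonoid.mem_top q) s (subset_spanOver P.one_mem hs)

theorem fgOver_iff_exists_finset_fgOver_closure (hQ : Group.FG Q)
    (hQ' : Group.FG (commutator Q)) (P : Submonoid Q) (hP : (commutator Q).toSubmonoid ≤ P) :
    fgOver (P : Set Q) A ↔ ∃ T : Finset Q, (T : Set Q) ⊆ P ∧
      fgOver (Submonoid.closure (T : Set Q) : Set Q) A := by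
  classical
  simp only [fgOver_iff_exists_spanOver_eq_top]
  constructor
  · rintro ⟨S, hS⟩
    obtain ⟨X, hX⟩ := (Group.fg_iff_monoid_fg.mp hQ).fg_top
    obtain ⟨C, hC⟩ := (Subgroup.fg_iff_submonoid_fg _).mp ((Group.fg_iff_subgroup_fg _).mp hQ')
    obtain ⟨F, hFP, hF⟩ := exists_finset_of_subset_spanOver (M := (P : Set Q)) (S := (S : Set A))
      ((X ×ˢ S).image fun p => of ℤ Q p.1 • p.2) (by simp [hS])
    let P' := Submonoid.closure ((F ∪ C : Finset Q) : Set Q)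
    have hP' : (commutator Q).toSubmonoid ≤ P' := hC ▸ Submonoid.closure_mono (by simp)
    have hXS : ∀ x ∈ (X : Set Q), ∀ s ∈ (S : Set A), of ℤ Q x • s ∈ spanOver (P' : Set Q) S :=
      fun x hx s hs => spanOver_mono (fun q hq => Submonoid.subset_closure (by simp [hq]))
        (hF (Finset.mem_image.2 ⟨(x, s), Finset.mem_product.2 ⟨hx, hs⟩, rfl⟩))
    refine ⟨F ∪ C, ?_, S, eq_top_iff.2 ?_⟩
    · rw [Finset.coe_union]
      exact Set.union_subset hFP ((hC ▸ Submonoid.subset_closure).trans hP)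
    · exact hS ▸ spanOver_le_of_closure_eq_top hP' hX hXS _
  · rintro ⟨T, hTP, S, hS⟩
    exact ⟨S, eq_top_iff.2 (hS ▸ spanOver_mono (Submonoid.closure_le.2 hTP))⟩

end SpanOver

section Character

variable {Q : Type*} [Group Q] {χ : Q → ℝ}

def nonnegSubmonoid (hχ : ∀ a b : Q, χ (a * b) = χ a + χ b) : Submonoid Q where
  carrier := {q | 0 ≤ χ q}
  one_mem' := by
    have h := hχ 1 1
    rw [one_mul] at h
    show 0 ≤ χ 1
    linarith
  mul_mem' {a b} ha hb := by
    show 0 ≤ χ (a * b)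
    rw [hχ]
    exact add_nonneg ha hb

theorem commutator_le_nonnegSubmonoid (hχ : ∀ a b : Q, χ (a * b) = χ a + χ b) :
    (commutator Q).toSubmonoid ≤ nonnegSubmonoid hχ := fun c hc => by
  let φ : Q →* Multiplicative ℝ :=
    MonoidHom.mk' (fun q => Multiplicative.ofAdd (χ q)) fun a b => by rw [hχ]; rfl
  have hφc : φ c = 1 := Abelianization.commutator_subset_ker φ hc
  exact (ofAdd_eq_one.1 hφc).symm.le

end Character

theorem stmt14_general {Q : Type*} [Group Q] (hQ : Group.FG Q)
    (hQ' : Group.FG (commutator Q))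
    (A : Type*) [AddCommGroup A] [Module (MonoidAlgebra ℤ Q) A]
    (χ : Q → ℝ) (hhom : ∀ a b : Q, χ (a * b) = χ a + χ b) :
    fgOver {q : Q | 0 ≤ χ q} A ↔
      ∃ T : Finset Q, (T : Set Q) ⊆ {q : Q | 0 ≤ χ q} ∧
        fgOver ((Submonoid.closure (T : Set Q) : Submonoid Q) : Set Q) A :=
  fgOver_iff_exists_finset_fgOver_closure hQ hQ' (nonnegSubmonoid hhom)
    (commutator_le_nonnegSubmonoid hhom)

theorem stmt14 {Q : Type*} [Group Q] (hQ : Group.FG Q)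
    (hQ' : Group.FG (commutator Q))
    (A : Type*) [AddCommGroup A] [Module (MonoidAlgebra ℤ Q) A]
    [Module.Finite (MonoidAlgebra ℤ Q) A]
    (χ : Q → ℝ) (hhom : ∀ a b : Q, χ (a * b) = χ a + χ b) (hne : χ ≠ 0) :
    fgOver {q : Q | 0 ≤ χ q} A ↔
      ∃ T : Finset Q, (T : Set Q) ⊆ {q : Q | 0 ≤ χ q} ∧
        fgOver ((Submonoid.closure (T : Set Q) : Submonoid Q) : Set Q) A :=
  stmt14_general hQ hQ' A χ hhom
end

section
/- Let 𝓕 be a finite collection of finite subsets L of the lattice ℤⁿ ⊂ ℝⁿ such that for every unit vector u ∈ S^{n-1} there exists L ∈ 𝓕 with ⟨u, x⟩ > 0 for all x ∈ L. Then there exists a natural number p₀ such that for every lattice point x with ⟨x, x⟩ = p + 1 > p₀, there exists L ∈ 𝓕 with x + L contained in the ball B_p = {y ∈ ℤⁿ | ‖y‖² ≤ p}. -/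
/-!
Since the open half-spaces `{u | ⟨u, y⟩ > 0}` cover the compact unit sphere through the finite
sets `L ∈ 𝓕`, compactness gives a uniform `ε > 0` with: every unit `u` admits some
`L ∈ 𝓕` with `⟨u, y⟩ ≥ ε` on `L`. For `‖x‖² = p + 1` take `u = -x / ‖x‖`; then for `y ∈ L`,
`‖x + y‖² = ‖x‖² + 2⟨x, y⟩ + ‖y‖² ≤ p + 1 - 2ε‖x‖ + max_{y ∈ ⋃ 𝓕} ‖y‖²`, which is `≤ p` as soon as
`‖x‖` is large.
-/

open Filter

theorem IsCompact.exists_pos_forall_le_of_forall_pos {X κ : Type*} [TopologicalSpace X]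
    {K : Set X} (hK : IsCompact K) (𝓕 : Set (Finset κ)) {f : κ → X → ℝ}
    (hf : ∀ y, Continuous (f y)) (h : ∀ x ∈ K, ∃ L ∈ 𝓕, ∀ y ∈ L, 0 < f y x) :
    ∃ ε > 0, ∀ x ∈ K, ∃ L ∈ 𝓕, ∀ y ∈ L, ε ≤ f y x := by
  set U : ℕ → Set X := fun m => ⋃ L ∈ 𝓕, ⋂ y ∈ L, {x | 1 / ((m : ℝ) + 1) < f y x}
  have mem_U {m : ℕ} {x : X} : x ∈ U m ↔ ∃ L ∈ 𝓕, ∀ y ∈ L, 1 / ((m : ℝ) + 1) < f y x := by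
    simp only [U, Set.mem_iUnion₂, Set.mem_iInter₂, Set.mem_ofPred_eq, exists_prop]
  have hU_open (m : ℕ) : IsOpen (U m) :=
    isOpen_biUnion fun L _ => isOpen_biInter_finset fun y _ => isOpen_lt continuous_const (hf y)
  have hU_mono : Monotone U := fun m m' hmm' x hx => by
    obtain ⟨L, hL, hlt⟩ := mem_U.1 hx
    exact mem_U.2 ⟨L, hL, fun y hy => (Nat.one_div_le_one_div hmm').trans_lt (hlt y hy)⟩
  have hKU : K ⊆ ⋃ m, U m := by
    intro x hx
    obtain ⟨L, hL, hpos⟩ := h x hx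
    have : ∀ᶠ m : ℕ in atTop, ∀ y ∈ L, 1 / ((m : ℝ) + 1) < f y x :=
      (eventually_all_finset L).2 fun y hy =>
        tendsto_one_div_add_atTop_nhds_zero_nat.eventually (gt_mem_nhds (hpos y hy))
    obtain ⟨m, hm⟩ := this.exists
    exact Set.mem_iUnion.2 ⟨m, mem_U.2 ⟨L, hL, hm⟩⟩
  obtain ⟨m, hm⟩ := hK.elim_directed_cover U hU_open hKU hU_mono.directed_le
  refine ⟨1 / ((m : ℝ) + 1), by positivity, fun x hx => ?_⟩
  obtain ⟨L, hL, hlt⟩ := mem_U.1 (hm hx)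
  exact ⟨L, hL, fun y hy => (hlt y hy).le⟩

theorem isCompact_setOf_sum_sq_eq_one (ι : Type*) [Fintype ι] :
    IsCompact {u : ι → ℝ | ∑ i, u i ^ 2 = 1} := by
  refine Metric.isCompact_of_isClosed_isBounded
    (isClosed_eq (by fun_prop) continuous_const) ((Metric.isBounded_closedBall (x := 0) (r := 1)).subset ?_)
  intro u hu
  rw [Metric.mem_closedBall, dist_zero_right, pi_norm_le_iff_of_nonneg zero_le_one]
  intro i
  rw [Real.norm_eq_abs, ← sq_le_one_iff_abs_le_one, ← hu.out]
  exact Finset.single_le_sum (f := fun i => u i ^ 2) (fun j _ => sq_nonneg (u j)) (Finset.mem_univ i)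

theorem sum_neg_div_sq_eq_one {ι : Type*} [Fintype ι] {x : ι → ℝ} {r : ℝ} (hr : r ≠ 0)
    (hx : ∑ i, x i ^ 2 = r ^ 2) : ∑ i, (-x i / r) ^ 2 = 1 := by
  simp_rw [div_pow, neg_sq, ← Finset.sum_div, hx]
  exact div_self (pow_ne_zero 2 hr)

theorem sum_add_sq_le_of_le_sum_neg_div_mul {ι : Type*} [Fintype ι] {x y : ι → ℝ} {r ε B : ℝ}
    (hr : 0 < r) (hx : ∑ i, x i ^ 2 = r ^ 2) (hxy : ε ≤ ∑ i, (-x i / r) * y i)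
    (hy : ∑ i, y i ^ 2 ≤ B) (hrB : B + 1 ≤ 2 * ε * r) :
    ∑ i, (x i + y i) ^ 2 ≤ r ^ 2 - 1 := by
  have hinner : ∑ i, x i * y i ≤ -(ε * r) := by
    have : ∑ i, (-x i / r) * y i = -(∑ i, x i * y i) / r := by
      rw [← Finset.sum_neg_distrib, Finset.sum_div]
      exact Finset.sum_congr rfl fun i _ => by ring
    rw [this, le_div_iff₀ hr] at hxy
    linarith
  calc ∑ i, (x i + y i) ^ 2 = ∑ i, x i ^ 2 + 2 * ∑ i, x i * y i + ∑ i, y i ^ 2 := by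
        simp only [add_sq, Finset.sum_add_distrib, Finset.mul_sum, mul_assoc]
    _ ≤ r ^ 2 - 1 := by rw [hx]; linarith

theorem stmt19 (n : ℕ) (𝓕 : Finset (Finset (Fin n → ℤ)))
    (hcov : ∀ u : Fin n → ℝ, (∑ i, u i ^ 2) = 1 →
      ∃ L ∈ 𝓕, ∀ x ∈ L, 0 < ∑ i, u i * (x i : ℝ)) :
    ∃ p₀ : ℕ, ∀ p : ℕ, ∀ x : Fin n → ℤ,
      (∑ i, x i ^ 2) = (p : ℤ) + 1 → p + 1 > p₀ →
      ∃ L ∈ 𝓕, ∀ y ∈ L, (∑ i, (x i + y i) ^ 2) ≤ (p : ℤ) := by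
  obtain ⟨ε, hε, hunif⟩ := (isCompact_setOf_sum_sq_eq_one (Fin n)).exists_pos_forall_le_of_forall_pos
    (𝓕 : Set (Finset (Fin n → ℤ))) (f := fun y u => ∑ i, u i * (y i : ℝ)) (fun y => by fun_prop) hcov
  obtain ⟨B, hB⟩ := ((𝓕.biUnion id).image fun y => ∑ i, (y i : ℝ) ^ 2).bddAbove
  refine ⟨⌈((B + 1) / (2 * ε)) ^ 2⌉₊, fun p x hx hp => ?_⟩
  set r := √((p : ℝ) + 1)
  have hr : 0 < r := by positivity
  have hxr : ∑ i, (x i : ℝ) ^ 2 = r ^ 2 := by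
    rw [Real.sq_sqrt (by positivity)]
    exact_mod_cast hx
  have hrB : B + 1 ≤ 2 * ε * r := by
    have hsq : ((B + 1) / (2 * ε)) ^ 2 < r ^ 2 := by
      rw [Real.sq_sqrt (by positivity)]
      exact (Nat.le_ceil _).trans_lt (by exact_mod_cast hp)
    have := lt_of_pow_lt_pow_left₀ 2 hr.le hsq
    rw [div_lt_iff₀ (by positivity), mul_comm] at this
    exact this.le
  obtain ⟨L, hL, hLε⟩ := hunif _ (sum_neg_div_sq_eq_one hr.ne' hxr)
  refine ⟨L, hL, fun y hy => ?_⟩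
  have hyB : ∑ i, (y i : ℝ) ^ 2 ≤ B :=
    hB (Finset.mem_image_of_mem _ (Finset.mem_biUnion.2 ⟨L, hL, hy⟩))
  have := sum_add_sq_le_of_le_sum_neg_div_mul hr hxr (hLε y hy) hyB hrB
  rw [Real.sq_sqrt (by positivity), add_sub_cancel_right] at this
  exact_mod_cast this
end
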